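/- arXiv:1401.6578 — 3 statements merged into one kernel-verified Lean document; each statement's English description precedes it below -/
import Mathlib

section
/- Fix m ≥ 2, δ ≥ 0, z̄ ∈ ℝᵐ, and 0 < t ≤ √(m−1) − √δ. Let γ_m satisfy γ_m² > √m√(m−1), γ_m ≤ √m, and assume √δ < √m. Define ℓ(t) = 2‖z̄‖(√δ + t)/(√(m−1) − √δ − t) and φ(α) = √(α²(γ_m − t/4)² + ‖z̄‖² − (1/2)α‖z̄‖t) − α(√δ + t/4). Then φ(α) > ‖z̄‖ for every α ≥ ℓ(t) with ℓ(t) > 0. -/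
theorem det_core (m : ℕ) (hm : 2 ≤ m) (δ : ℝ) (hδ : 0 ≤ δ) (znorm : ℝ) (hz : 0 ≤ znorm)
    (t : ℝ) (ht : 0 < t) (ht2 : t ≤ Real.sqrt (m - 1) - Real.sqrt δ)
    (γ : ℝ) (hγ1 : γ ^ 2 > Real.sqrt m * Real.sqrt (m - 1)) (hγ2 : γ ≤ Real.sqrt m)
    (hδm : Real.sqrt δ < Real.sqrt m)
    (ℓ : ℝ) (hℓ : ℓ = 2 * znorm * (Real.sqrt δ + t) / (Real.sqrt (m - 1) - Real.sqrt δ - t))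
    (hℓpos : 0 < ℓ) :
    ∀ α : ℝ, ℓ ≤ α →
      Real.sqrt (α ^ 2 * (γ - t / 4) ^ 2 + znorm ^ 2 - (1 / 2) * α * znorm * t) -
          α * (Real.sqrt δ + t / 4) > znorm := by
  intro α hα
  set s := Real.sqrt δ with hs
  set r := Real.sqrt ((m : ℝ) - 1) with hr
  have hs0 : 0 ≤ s := Real.sqrt_nonneg _
  have hr1 : 1 ≤ r := by
    have h2m : (2 : ℝ) ≤ (m : ℝ) := by exact_mod_cast hm
    calc (1:ℝ) = Real.sqrt 1 := Real.sqrt_one.symm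
      _ ≤ r := Real.sqrt_le_sqrt (by linarith)
  have hden0 : 0 ≤ r - s - t := by linarith
  have hden : 0 < r - s - t := by
    rcases eq_or_lt_of_le hden0 with h | h
    · exfalso
      rw [hℓ, ← h, div_zero] at hℓpos
      exact lt_irrefl 0 hℓpos
    · exact h
  have hz0 : 0 < znorm := by
    rcases eq_or_lt_of_le hz with h | h
    · exfalso
      rw [hℓ, ← h] at hℓpos
      simp at hℓpos
    · exact h
  have hℓ' : ℓ * (r - s - t) = 2 * znorm * (s + t) := by
    rw [hℓ]; field_simp
  have hαpos : 0 < α := lt_of_lt_of_le hℓpos hα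
  have hα' : 2 * znorm * (s + t) ≤ α * (r - s - t) := by
    have := mul_le_mul_of_nonneg_right hα hden.le
    linarith [hℓ']
  have hrm : r ≤ Real.sqrt m := by
    apply Real.sqrt_le_sqrt; linarith
  have hγr2 : (r - t / 4) ^ 2 < (γ - t / 4) ^ 2 := by
    rcases le_or_gt γ 0 with h | h
    · have h2 : r ^ 2 < γ ^ 2 := by
        nlinarith [mul_nonneg (sub_nonneg.mpr hrm) (by linarith : (0:ℝ) ≤ r)]
      nlinarith
    · have hγgtr : r < γ := by
        nlinarith [mul_nonneg (sub_nonneg.mpr hγ2) (by linarith : (0:ℝ) ≤ r)]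
      nlinarith
  have hrhs : 0 ≤ znorm + α * (s + t / 4) := by
    have : 0 ≤ α * (s + t / 4) := mul_nonneg hαpos.le (by linarith)
    linarith
  rw [gt_iff_lt, lt_sub_iff_add_lt]
  have key : (znorm + α * (s + t / 4)) ^ 2 <
      α ^ 2 * (γ - t / 4) ^ 2 + znorm ^ 2 - 1 / 2 * α * znorm * t := by
    have h5 : α ^ 2 * (r - t / 4) ^ 2 < α ^ 2 * (γ - t / 4) ^ 2 :=
      mul_lt_mul_of_pos_left hγr2 (pow_pos hαpos 2)
    have h6 : α * (2 * znorm * (s + t)) ≤ α * (α * (r - s - t)) :=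
      mul_le_mul_of_nonneg_left hα' hαpos.le
    have hB : α * (2 * znorm * (s + t)) * (r + s) ≤ α * (α * (r - s - t)) * (r + s) :=
      mul_le_mul_of_nonneg_right h6 (by linarith)
    have hC : 0 ≤ α ^ 2 * (t / 2) * (r + s) := by positivity
    have hD : 0 ≤ 2 * α * znorm * (s + t) * (r + s - 1) := by
      have : 0 ≤ α * znorm * (s + t) := by positivity
      nlinarith
    have hE : 0 < α * znorm * t := by positivity
    linarith [hB, hC, hD, hE, h5]
  exact Real.lt_sqrt_of_sq_lt key
end

section
/- Let h ~ N(0,1) and λ ≥ 0. Then E[shrink²(h, λ)] = (1 + λ²)·erfc(λ/√2) − √(2/π)·λ·exp(−λ²/2), where shrink(χ,λ) = χ−λ for χ>λ, 0 for |χ|≤λ, χ+λ for χ<−λ, and erfc is the complementary error function. -/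
open MeasureTheory ProbabilityTheory Real

noncomputable def shrink (χ l : ℝ) : ℝ :=
  if χ > l then χ - l else if χ < -l then χ + l else 0

noncomputable def erfc (x : ℝ) : ℝ :=
  (2 / Real.sqrt π) * ∫ u in Set.Ioi x, Real.exp (-u ^ 2)

open Set Filter Topology

/-! For `λ ≥ 0`, `shrink(x, λ)² = 1_{|x| > λ} (|x| - λ)²`, so by evenness of the Gaussian density
the expectation is `2 ∫_λ^∞ (x - λ)² φ(x) dx`. Since
`(x - λ)² e^{-x²/2} = (1 + λ²) e^{-x²/2} + d/dx [(2λ - x) e^{-x²/2}]`,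
this tail integral is `(1 + λ²) P(h > λ) - λ φ(λ)`, and `2 P(h > λ) = erfc(λ/√2)`. -/

lemma integrable_pow_mul_exp_neg_sq_div_two (n : ℕ) :
    Integrable fun x : ℝ => x ^ n * exp (-x ^ 2 / 2) := by
  have h := integrable_rpow_mul_exp_neg_mul_sq (b := 1 / 2) (by norm_num) (s := n)
    (by linarith [n.cast_nonneg (α := ℝ)])
  refine h.congr (ae_of_all _ fun x => ?_)
  simp only [rpow_natCast]
  ring_nf

lemma hasDerivAt_two_mul_sub_mul_exp_neg_sq_div_two (l x : ℝ) :
    HasDerivAt (fun x => (2 * l - x) * exp (-x ^ 2 / 2))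
      (((x - l) ^ 2 - (1 + l ^ 2)) * exp (-x ^ 2 / 2)) x := by
  refine (((hasDerivAt_id' x).const_sub (2 * l)).mul
    (((hasDerivAt_pow 2 x).fun_neg.div_const 2).exp)).congr_deriv ?_
  push_cast
  ring

lemma integral_Ioi_sub_sq_mul_exp_neg_sq_div_two (l : ℝ) :
    ∫ x in Ioi l, (x - l) ^ 2 * exp (-x ^ 2 / 2) =
      (1 + l ^ 2) * (∫ x in Ioi l, exp (-x ^ 2 / 2)) - l * exp (-l ^ 2 / 2) := by
  set F : ℝ → ℝ := fun x => (2 * l - x) * exp (-x ^ 2 / 2)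
  have hF' := hasDerivAt_two_mul_sub_mul_exp_neg_sq_div_two l
  have hpow := integrable_pow_mul_exp_neg_sq_div_two
  have hexp : Integrable fun x : ℝ => exp (-x ^ 2 / 2) := by simpa using hpow 0
  have hF'_int : Integrable fun x : ℝ => ((x - l) ^ 2 - (1 + l ^ 2)) * exp (-x ^ 2 / 2) :=
    (((hpow 2).sub ((hpow 1).const_mul (2 * l))).sub hexp).congr
      (ae_of_all _ fun x => by simp only [Pi.sub_apply]; ring)
  have hF_int : Integrable F :=
    ((hexp.const_mul (2 * l)).sub (hpow 1)).congr
      (ae_of_all _ fun x => by simp only [Pi.sub_apply, F]; ring)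
  have hF_lim : Tendsto F atTop (𝓝 0) :=
    tendsto_zero_of_hasDerivAt_of_integrableOn_Ioi (a := l) (fun x _ => hF' x)
      hF'_int.integrableOn hF_int.integrableOn
  have hFTC : ∫ x in Ioi l, ((x - l) ^ 2 - (1 + l ^ 2)) * exp (-x ^ 2 / 2) = 0 - F l :=
    integral_Ioi_of_hasDerivAt_of_tendsto' (fun x _ => hF' x) hF'_int.integrableOn hF_lim
  calc ∫ x in Ioi l, (x - l) ^ 2 * exp (-x ^ 2 / 2)
      = ∫ x in Ioi l, (((x - l) ^ 2 - (1 + l ^ 2)) * exp (-x ^ 2 / 2)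
          + (1 + l ^ 2) * exp (-x ^ 2 / 2)) := by
        congr with x; ring
    _ = (0 - F l) + (1 + l ^ 2) * ∫ x in Ioi l, exp (-x ^ 2 / 2) := by
        rw [integral_add hF'_int.integrableOn (hexp.const_mul _).integrableOn,
          integral_const_mul, hFTC]
    _ = _ := by simp only [F]; ring

lemma erfc_div_sqrt_two (l : ℝ) :
    erfc (l / √2) = √(2 / π) * ∫ x in Ioi l, exp (-x ^ 2 / 2) := by
  have h := integral_comp_mul_left_Ioi (fun u => exp (-u ^ 2)) l (b := (√2)⁻¹) (by positivity)
  have hsq : ∀ x : ℝ, -((√2)⁻¹ * x) ^ 2 = -x ^ 2 / 2 := fun x => by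
    rw [mul_pow, inv_pow, sq_sqrt zero_le_two]; ring
  simp only [hsq, inv_inv, smul_eq_mul] at h
  rw [erfc, h, ← inv_mul_eq_div, sqrt_div' _ pi_nonneg]
  field_simp
  rw [sq_sqrt zero_le_two]

lemma shrink_sq_eq_indicator_abs {l : ℝ} (hl : 0 ≤ l) (x : ℝ) :
    shrink x l ^ 2 = (Ioi l).indicator (fun t => (t - l) ^ 2) |x| := by
  simp only [shrink, indicator_apply, mem_Ioi, lt_abs]
  split_ifs <;> grind

lemma gaussianPDFReal_zero_one (x : ℝ) :
    gaussianPDFReal 0 1 x = (√(2 * π))⁻¹ * exp (-x ^ 2 / 2) := by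
  simp [gaussianPDFReal]

lemma two_mul_inv_sqrt_two_mul_pi : 2 * (√(2 * π))⁻¹ = √(2 / π) := by
  rw [sqrt_div' _ pi_nonneg, sqrt_mul zero_le_two]
  field_simp
  rw [sq_sqrt zero_le_two]

theorem expected_shrink_sq (l : ℝ) (hl : 0 ≤ l) :
    ∫ x, shrink x l ^ 2 ∂(gaussianReal 0 1) =
      (1 + l ^ 2) * erfc (l / Real.sqrt 2) - Real.sqrt (2 / π) * l * exp (-l ^ 2 / 2) := by
  have hintegrand : ∀ x, gaussianPDFReal 0 1 x • shrink x l ^ 2 =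
      (Ioi l).indicator (fun t => (t - l) ^ 2 * gaussianPDFReal 0 1 t) |x| := fun x => by
    rw [smul_eq_mul, mul_comm, shrink_sq_eq_indicator_abs hl, indicator_mul_left,
      gaussianPDFReal_zero_one, gaussianPDFReal_zero_one, sq_abs]
  calc ∫ x, shrink x l ^ 2 ∂(gaussianReal 0 1)
      = ∫ x, (Ioi l).indicator (fun t => (t - l) ^ 2 * gaussianPDFReal 0 1 t) |x| := by
        rw [integral_gaussianReal_eq_integral_smul one_ne_zero]
        simp only [hintegrand]
    _ = 2 * ∫ t in Ioi l, (t - l) ^ 2 * gaussianPDFReal 0 1 t := by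
        rw [integral_comp_abs, setIntegral_indicator measurableSet_Ioi, Ioi_inter_Ioi,
          sup_eq_right.2 hl]
    _ = 2 * (√(2 * π))⁻¹ * ∫ t in Ioi l, (t - l) ^ 2 * exp (-t ^ 2 / 2) := by
        simp only [gaussianPDFReal_zero_one, mul_left_comm _ (√(2 * π))⁻¹, integral_const_mul]
        ring
    _ = _ := by
        rw [integral_Ioi_sub_sq_mul_exp_neg_sq_div_two, erfc_div_sqrt_two,
          two_mul_inv_sqrt_two_mul_pi]
        ring
end

section
/- For λ ≥ √(2 log(n/k)) with 1 ≤ k ≤ n, the Gaussian squared distance of the scaled ℓ₁ subdifferential at a k-sparse vector x₀ satisfies δ(λ∂‖x₀‖₁) ≤ (λ² + 3)k. -/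
/-!
Choosing, coordinate by coordinate, the point of `λ • ∂‖x₀‖₁` nearest to `h` bounds the
squared distance by a sum of one-dimensional terms: `(hᵢ - λ sign x₀ᵢ)²` on the support,
whose Gaussian mean is `1 + λ²`, and `(|hᵢ| - λ)₊²` off it. For `|x| ≥ λ` we have
`x² ≥ λ² + (|x| - λ)²`, so the standard normal density at `x` is at most `e^{-λ²/2}` times
the `N(±λ, 1)` density there; hence `E (|g| - λ)₊² ≤ 2 e^{-λ²/2} ≤ 2k/n` by the choice of `λ`,
and summing gives `k (1 + λ²) + (n - k) 2k/n ≤ (λ² + 3) k`.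
-/

open MeasureTheory ProbabilityTheory Real
open scoped NNReal Pointwise

lemma integral_sub_sq_gaussianReal (μ : ℝ) (v : ℝ≥0) (c : ℝ) :
    ∫ x, (x - c) ^ 2 ∂gaussianReal μ v = v + (μ - c) ^ 2 := by
  have hX : MemLp (fun x => x - c) 2 (gaussianReal μ v) :=
    (memLp_id_gaussianReal 2).sub (memLp_const c)
  have hmean : ∫ x, x - c ∂gaussianReal μ v = μ - c := by
    rw [integral_sub (f := fun x => x) ((memLp_id_gaussianReal 1).integrable le_rfl)
      (integrable_const c), integral_id_gaussianReal, integral_const, probReal_univ, one_smul]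
  have hvar := variance_eq_sub hX
  rw [variance_sub_const (X := fun x => x) aestronglyMeasurable_id, variance_fun_id_gaussianReal,
    hmean] at hvar
  simp only [Pi.pow_apply] at hvar
  linarith

lemma integrable_sub_sq_gaussianReal (μ : ℝ) (v : ℝ≥0) (c : ℝ) :
    Integrable (fun x => (x - c) ^ 2) (gaussianReal μ v) :=
  ((memLp_id_gaussianReal 2).sub (memLp_const c)).integrable_sq

lemma integrable_gaussianPDFReal_mul {μ : ℝ} {v : ℝ≥0} (hv : v ≠ 0) {f : ℝ → ℝ}
    (hf : Integrable f (gaussianReal μ v)) :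
    Integrable fun x => gaussianPDFReal μ v x * f x := by
  rw [gaussianReal_of_var_ne_zero _ hv, integrable_withDensity_iff_integrable_smul'
    (measurable_gaussianPDF _ _) (ae_of_all _ fun _ => gaussianPDF_lt_top)] at hf
  simpa [toReal_gaussianPDF] using hf

lemma gaussianPDFReal_le_exp_mul_gaussianPDFReal {a x : ℝ} (h : a ^ 2 ≤ a * x) :
    gaussianPDFReal 0 1 x ≤ exp (-(a ^ 2 / 2)) * gaussianPDFReal a 1 x := by
  simp only [gaussianPDFReal, NNReal.coe_one, mul_one, sub_zero, mul_left_comm (exp _),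
    ← exp_add]
  gcongr
  nlinarith

lemma gaussianPDFReal_mul_sq_posPart_le {l : ℝ} (hl : 0 ≤ l) (x : ℝ) :
    gaussianPDFReal 0 1 x * max (|x| - l) 0 ^ 2 ≤ exp (-(l ^ 2 / 2)) *
      (gaussianPDFReal l 1 x * (x - l) ^ 2 + gaussianPDFReal (-l) 1 x * (x - -l) ^ 2) := by
  have h₁ := gaussianPDFReal_nonneg l 1 x
  have h₂ := gaussianPDFReal_nonneg (-l) 1 x
  have he := (exp_pos (-(l ^ 2 / 2))).le
  rcases le_or_gt l x with hx | hx
  · have := gaussianPDFReal_le_exp_mul_gaussianPDFReal (a := l) (x := x) (by nlinarith)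
    rw [abs_of_nonneg (by linarith), max_eq_left (by linarith)]
    nlinarith [mul_le_mul_of_nonneg_right this (sq_nonneg (x - l)),
      mul_nonneg he (mul_nonneg h₂ (sq_nonneg (x - -l)))]
  rcases le_or_gt x (-l) with hx' | hx'
  · have := gaussianPDFReal_le_exp_mul_gaussianPDFReal (a := -l) (x := x) (by nlinarith)
    rw [neg_sq] at this
    rw [abs_of_nonpos (by linarith), max_eq_left (by linarith)]
    nlinarith [mul_le_mul_of_nonneg_right this (sq_nonneg (x - -l)),
      mul_nonneg he (mul_nonneg h₁ (sq_nonneg (x - l)))]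
  · rw [max_eq_right (by linarith [abs_lt.mpr ⟨hx', hx⟩])]
    simp only [ne_eq, OfNat.ofNat_ne_zero, not_false_eq_true, zero_pow, mul_zero]
    positivity

lemma integral_sq_posPart_abs_sub_le {l : ℝ} (hl : 0 ≤ l) :
    ∫ x, max (|x| - l) 0 ^ 2 ∂gaussianReal 0 1 ≤ 2 * exp (-(l ^ 2 / 2)) := by
  have hdensity (c : ℝ) : ∫ x, gaussianPDFReal c 1 x * (x - c) ^ 2 = 1 := by
    have := integral_gaussianReal_eq_integral_smul (μ := c) (f := fun x => (x - c) ^ 2)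
      one_ne_zero
    rw [integral_sub_sq_gaussianReal] at this
    simpa using this.symm
  have hint (c : ℝ) : Integrable fun x => gaussianPDFReal c 1 x * (x - c) ^ 2 :=
    integrable_gaussianPDFReal_mul one_ne_zero (integrable_sub_sq_gaussianReal c 1 c)
  calc ∫ x, max (|x| - l) 0 ^ 2 ∂gaussianReal 0 1
      = ∫ x, gaussianPDFReal 0 1 x * max (|x| - l) 0 ^ 2 := by
        simp_rw [integral_gaussianReal_eq_integral_smul one_ne_zero, smul_eq_mul]
    _ ≤ ∫ x, exp (-(l ^ 2 / 2)) *
          (gaussianPDFReal l 1 x * (x - l) ^ 2 + gaussianPDFReal (-l) 1 x * (x - -l) ^ 2) :=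
        integral_mono_of_nonneg
          (ae_of_all _ fun x => mul_nonneg (gaussianPDFReal_nonneg 0 1 x) (sq_nonneg _))
          (((hint l).add (hint (-l))).const_mul _)
          (ae_of_all _ (gaussianPDFReal_mul_sq_posPart_le hl))
    _ = 2 * exp (-(l ^ 2 / 2)) := by
        rw [integral_const_mul, integral_add (hint l) (hint (-l)), hdensity, hdensity]
        ring

/-- The squared distance from `t` to `l • ∂|·|(a)`, which is `l • [-1, 1]` if `a = 0` and
`{l * sign a}` otherwise. -/
noncomputable def sqDistSmulSubdiffAbs (l a t : ℝ) : ℝ :=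
  if a = 0 then max (|t| - l) 0 ^ 2 else (t - l * Real.sign a) ^ 2

lemma integrable_sqDistSmulSubdiffAbs {l : ℝ} (hl : 0 ≤ l) (a : ℝ) :
    Integrable (sqDistSmulSubdiffAbs l a) (gaussianReal 0 1) := by
  unfold sqDistSmulSubdiffAbs
  split_ifs
  · refine (integrable_sub_sq_gaussianReal 0 1 0).mono' (by fun_prop) (ae_of_all _ fun t => ?_)
    have h₀ : 0 ≤ max (|t| - l) 0 := le_max_right _ _
    rw [norm_pow, Real.norm_eq_abs, abs_of_nonneg h₀, sub_zero, ← sq_abs t]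
    exact pow_le_pow_left₀ h₀ (max_le (by linarith) (abs_nonneg t)) 2
  · exact integrable_sub_sq_gaussianReal 0 1 _

lemma integral_sqDistSmulSubdiffAbs_le {l : ℝ} (hl : 0 ≤ l) (a : ℝ) :
    ∫ t, sqDistSmulSubdiffAbs l a t ∂gaussianReal 0 1 ≤
      if a = 0 then 2 * exp (-(l ^ 2 / 2)) else 1 + l ^ 2 := by
  unfold sqDistSmulSubdiffAbs
  split_ifs with ha
  · exact integral_sq_posPart_abs_sub_le hl
  · rw [integral_sub_sq_gaussianReal]
    rcases Real.sign_apply_eq_of_ne_zero a ha with h | h <;> simp [h]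

lemma sq_sub_max_neg_min {l : ℝ} (hl : 0 ≤ l) (t : ℝ) :
    (t - max (-l) (min l t)) ^ 2 = max (|t| - l) 0 ^ 2 := by
  rcases le_total l t with h | h
  · rw [min_eq_left h, max_eq_right (by linarith), abs_of_nonneg (by linarith),
      max_eq_left (by linarith)]
  rcases le_total t (-l) with h' | h'
  · rw [min_eq_right h, max_eq_left h', abs_of_nonpos (by linarith), max_eq_left (by linarith)]
    ring
  · rw [min_eq_right h, max_eq_right h', sub_self,
      max_eq_right (by linarith [abs_le.mpr ⟨h', h⟩])]

section

variable {ι : Type*}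

def subdiffL1Norm (x₀ : EuclideanSpace ℝ ι) : Set (EuclideanSpace ℝ ι) :=
  {s | (∀ i, |s i| ≤ 1) ∧ ∀ i, x₀ i ≠ 0 → s i = Real.sign (x₀ i)}

lemma mem_smul_subdiffL1Norm {x₀ p : EuclideanSpace ℝ ι} {l : ℝ} (hl : 0 ≤ l)
    (hp : ∀ i, |p i| ≤ l) (hsupp : ∀ i, x₀ i ≠ 0 → p i = l * Real.sign (x₀ i)) :
    p ∈ l • subdiffL1Norm x₀ := by
  rcases hl.eq_or_lt with rfl | hl
  · have hsign : (WithLp.toLp 2 fun i => Real.sign (x₀ i)) ∈ subdiffL1Norm x₀ := by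
      refine ⟨fun i => ?_, fun i _ => rfl⟩
      rcases Real.sign_apply_eq (x₀ i) with h | h | h <;> simp [h]
    have hp0 : p = 0 := by
      ext i
      simpa using hp i
    rw [hp0, Set.zero_smul_set ⟨_, hsign⟩]
    exact Set.zero_mem_zero
  · rw [Set.mem_smul_set_iff_inv_smul_mem₀ hl.ne']
    refine ⟨fun i => ?_, fun i hi => ?_⟩
    · simpa [abs_mul, abs_of_pos hl, inv_mul_le_one₀ hl] using hp i
    · simp [hsupp i hi, hl.ne']

lemma infDist_smul_subdiffL1Norm_sq_le [Fintype ι] (x₀ h : EuclideanSpace ℝ ι) {l : ℝ}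
    (hl : 0 ≤ l) :
    Metric.infDist h (l • subdiffL1Norm x₀) ^ 2 ≤ ∑ i, sqDistSmulSubdiffAbs l (x₀ i) (h i) := by
  let p : EuclideanSpace ℝ ι := WithLp.toLp 2 fun i =>
    if x₀ i = 0 then max (-l) (min l (h i)) else l * Real.sign (x₀ i)
  have hp : p ∈ l • subdiffL1Norm x₀ := by
    refine mem_smul_subdiffL1Norm hl (fun i => ?_) (fun i hi => by simp [p, hi])
    by_cases hi : x₀ i = 0
    · simp only [p, hi, if_true]
      exact abs_le.mpr ⟨le_max_left _ _, max_le (by linarith) (min_le_left _ _)⟩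
    · rcases Real.sign_apply_eq_of_ne_zero _ hi with h | h <;> simp [p, hi, h, abs_of_nonneg hl]
  calc Metric.infDist h (l • subdiffL1Norm x₀) ^ 2 ≤ dist h p ^ 2 := by
        gcongr
        exacts [Metric.infDist_nonneg, Metric.infDist_le_dist_of_mem hp]
    _ = ∑ i, sqDistSmulSubdiffAbs l (x₀ i) (h i) := by
        rw [EuclideanSpace.dist_eq, sq_sqrt (by positivity)]
        refine Finset.sum_congr rfl fun i _ => ?_
        by_cases hi : x₀ i = 0
        · simp [sqDistSmulSubdiffAbs, p, hi, Real.dist_eq, sq_sub_max_neg_min hl (h i)]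
        · simp [sqDistSmulSubdiffAbs, p, hi, Real.dist_eq]

end

section

variable {ι : Type*} [Fintype ι] {ν : Measure ℝ} [IsProbabilityMeasure ν]

lemma integrable_sum_comp_eval_toLp {f : ι → ℝ → ℝ} (hf : ∀ i, Integrable (f i) ν) :
    Integrable (fun h : EuclideanSpace ℝ ι => ∑ i, f i (h i))
      (Measure.map (MeasurableEquiv.toLp 2 (ι → ℝ)) (Measure.pi fun _ => ν)) := by
  rw [integrable_map_equiv]
  exact integrable_finsetSum _ fun i _ => integrable_comp_eval (hf i)

lemma integral_sum_comp_eval_toLp {f : ι → ℝ → ℝ} (hf : ∀ i, Integrable (f i) ν) :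
    ∫ h : EuclideanSpace ℝ ι, ∑ i, f i (h i)
        ∂(Measure.map (MeasurableEquiv.toLp 2 (ι → ℝ)) (Measure.pi fun _ => ν)) =
      ∑ i, ∫ t, f i t ∂ν := by
  rw [integral_map_equiv]
  exact (integral_finsetSum _ fun i _ => integrable_comp_eval (hf i)).trans
    (Finset.sum_congr rfl fun i _ => integral_comp_eval (hf i).aestronglyMeasurable)

end

lemma nat_mul_exp_neg_sq_half_le {m k : ℕ} {l : ℝ} (hk : 0 < k)
    (hl : 2 * log ((m + k) / k) ≤ l ^ 2) : m * exp (-(l ^ 2 / 2)) ≤ k := by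
  have hk' : (0 : ℝ) < k := by exact_mod_cast hk
  have hexp : exp (-(l ^ 2 / 2)) ≤ k / (m + k) := by
    calc exp (-(l ^ 2 / 2)) ≤ exp (log (k / (m + k))) := by
          rw [← inv_div ((m : ℝ) + k) k, log_inv]
          gcongr
          linarith
      _ = k / (m + k) := exp_log (by positivity)
  calc (m : ℝ) * exp (-(l ^ 2 / 2)) ≤ m * (k / (m + k)) := by gcongr
    _ ≤ k := by
        rw [mul_div_assoc', div_le_iff₀ (by positivity)]
        nlinarith

theorem gaussian_sq_dist_l1_bound_general {n : ℕ} (x₀ : EuclideanSpace ℝ (Fin n)) (l : ℝ)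
    (k : ℕ) (hk : k = (Finset.univ.filter fun i => x₀ i ≠ 0).card)
    (hk1 : 1 ≤ k)
    (hl : l ≥ Real.sqrt (2 * Real.log (n / k)))
    (D : Set (EuclideanSpace ℝ (Fin n)))
    (hD : D = {s | (∀ i, |s i| ≤ 1) ∧ ∀ i, x₀ i ≠ 0 → s i = Real.sign (x₀ i)})
    (μ : Measure (EuclideanSpace ℝ (Fin n)))
    (hμ : μ = Measure.map (MeasurableEquiv.toLp 2 (Fin n → ℝ)) (Measure.pi fun _ : Fin n => gaussianReal 0 1)) :
    ∫ h, Metric.infDist h (l • D) ^ 2 ∂μ ≤ (l ^ 2 + 3) * k := by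
  subst hD
  obtain ⟨hl₀, hlog⟩ := Real.sqrt_le_iff.mp hl
  have hmk : ((Finset.univ.filter fun i => x₀ i = 0).card : ℝ) + k = n := by
    have := Finset.univ.card_filter_add_card_filter_not fun i => x₀ i = 0
    rw [Finset.card_univ, Fintype.card_fin] at this
    rw [hk]
    exact_mod_cast this
  have hint i := integrable_sqDistSmulSubdiffAbs hl₀ (x₀ i)
  calc ∫ h, Metric.infDist h (l • subdiffL1Norm x₀) ^ 2 ∂μ
      ≤ ∫ h, ∑ i, sqDistSmulSubdiffAbs l (x₀ i) (h i) ∂μ :=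
        integral_mono_of_nonneg (ae_of_all _ fun _ => sq_nonneg _)
          (hμ ▸ integrable_sum_comp_eval_toLp hint)
          (ae_of_all _ fun h => infDist_smul_subdiffL1Norm_sq_le x₀ h hl₀)
    _ = ∑ i, ∫ t, sqDistSmulSubdiffAbs l (x₀ i) t ∂gaussianReal 0 1 :=
        hμ ▸ integral_sum_comp_eval_toLp hint
    _ ≤ ∑ i, if x₀ i = 0 then 2 * exp (-(l ^ 2 / 2)) else 1 + l ^ 2 :=
        Finset.sum_le_sum fun i _ => integral_sqDistSmulSubdiffAbs_le hl₀ (x₀ i)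
    _ = (Finset.univ.filter fun i => x₀ i = 0).card * (2 * exp (-(l ^ 2 / 2))) +
          k * (1 + l ^ 2) := by
        rw [Finset.sum_ite, Finset.sum_const, Finset.sum_const, hk, nsmul_eq_mul, nsmul_eq_mul]
    _ ≤ (l ^ 2 + 3) * k := by
        have := nat_mul_exp_neg_sq_half_le hk1 (by rwa [hmk])
        linarith

theorem gaussian_sq_dist_l1_bound {n : ℕ} (x₀ : EuclideanSpace ℝ (Fin n)) (l : ℝ)
    (k : ℕ) (hk : k = (Finset.univ.filter fun i => x₀ i ≠ 0).card)
    (hk1 : 1 ≤ k) (hkn : k ≤ n)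
    (hl : l ≥ Real.sqrt (2 * Real.log (n / k)))
    (D : Set (EuclideanSpace ℝ (Fin n)))
    (hD : D = {s | (∀ i, |s i| ≤ 1) ∧ ∀ i, x₀ i ≠ 0 → s i = Real.sign (x₀ i)})
    (μ : Measure (EuclideanSpace ℝ (Fin n)))
    (hμ : μ = Measure.map (MeasurableEquiv.toLp 2 (Fin n → ℝ)) (Measure.pi fun _ : Fin n => gaussianReal 0 1)) :
    ∫ h, Metric.infDist h (l • D) ^ 2 ∂μ ≤ (l ^ 2 + 3) * k :=
  gaussian_sq_dist_l1_bound_general x₀ l k hk hk1 hl D hD μ hμ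
end
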